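/- Let (R, E, [.,.], ρ) be a Lie–Rinehart algebra (untwisted Jacobi identity) and let B : E × E → ker ρ be an alternating R-bilinear map. Define the modified bracket [φ,ψ]_B := [φ,ψ] + B(φ,ψ). Then: (a) [.,.]_B is skew-symmetric k-bilinear and satisfies the Leibniz rule [φ, f·ψ]_B = ρ(φ)(f)·ψ + f·[φ,ψ]_B, and ρ([φ,ψ]_B) = ρ([φ,ψ]); (b) its Jacobiator is [φ,[ψ₁,ψ₂]_B]_B − [[φ,ψ₁]_B,ψ₂]_B − [ψ₁,[φ,ψ₂]_B]_B = (D₀B)(φ,ψ₁,ψ₂) + B(φ, B(ψ₁,ψ₂)) + B(ψ₂, B(φ,ψ₁)) − B(ψ₁, B(φ,ψ₂)), where D₀B(ψ₀,ψ₁,ψ₂) = [ψ₀,B(ψ₁,ψ₂)] − [ψ₁,B(ψ₀,ψ₂)] + [ψ₂,B(ψ₀,ψ₁)] − B([ψ₀,ψ₁],ψ₂) + B([ψ₀,ψ₂],ψ₁) − B([ψ₁,ψ₂],ψ₀); in particular the Jacobiator takes values in ker ρ. (c) If moreover B(χ,κ) = 0 whenever κ ∈ ker ρ, then the Jacobiator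 equals D₀B, so (E, ρ, [.,.]_B) satisfies the twisted Jacobi identity with twist H = D₀B. -/

import Mathlib

/-!
Expanding `[φ,ψ]_B = [φ,ψ] + B(φ,ψ)` biadditively, the Jacobiator of `[.,.]_B` splits into the
Jacobiator of `[.,.]` (zero), the terms linear in `B`, which after skew-symmetry are exactly the
Chevalley–Eilenberg differential `D₀B`, and the terms quadratic in `B`. The anchor kills `B`, and
by the anchor property also every `[ψ, B(·,·)]`, hence the whole Jacobiator.
-/

namespace LieRinehart

section Bracket

variable {E : Type*} [AddCommGroup E]

def jacobiator (br : E → E → E) (φ ψ₁ ψ₂ : E) : E :=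
  br φ (br ψ₁ ψ₂) - br (br φ ψ₁) ψ₂ - br ψ₁ (br φ ψ₂)

theorem jacobiator_eq_zero {br : E → E → E}
    (jacobi : ∀ φ ψ₁ ψ₂ : E, br φ (br ψ₁ ψ₂) = br (br φ ψ₁) ψ₂ + br ψ₁ (br φ ψ₂))
    (φ ψ₁ ψ₂ : E) : jacobiator br φ ψ₁ ψ₂ = 0 := by
  rw [jacobiator, jacobi, sub_sub, sub_self]

theorem add_right_of_skew {br : E → E → E}
    (add_left : ∀ φ₁ φ₂ ψ : E, br (φ₁ + φ₂) ψ = br φ₁ ψ + br φ₂ ψ)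
    (skew : ∀ φ ψ : E, br φ ψ = - br ψ φ) (φ ψ₁ ψ₂ : E) :
    br φ (ψ₁ + ψ₂) = br φ ψ₁ + br φ ψ₂ := by
  rw [skew, add_left, neg_add, ← skew, ← skew]

theorem smul_right_of_skew {k : Type*} [Semiring k] [Module k E] {br : E → E → E}
    (smul_left : ∀ (a : k) (φ ψ : E), br (a • φ) ψ = a • br φ ψ)
    (skew : ∀ φ ψ : E, br φ ψ = - br ψ φ) (a : k) (φ ψ : E) :
    br φ (a • ψ) = a • br φ ψ := by
  rw [skew, smul_left, ← smul_neg, ← skew]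

end Bracket

section Modified

variable {R E : Type*} [CommRing R] [AddCommGroup E] [Module R E]

def modBracket (br : E → E → E) (B : E →ₗ[R] E →ₗ[R] E) (φ ψ : E) : E :=
  br φ ψ + B φ ψ

/-- The paper's `D₀B`: the Chevalley–Eilenberg differential of the `2`-cochain `B` with
coefficients in the adjoint action `br`. -/
def adjointDifferential (br : E → E → E) (B : E →ₗ[R] E →ₗ[R] E) (ψ₀ ψ₁ ψ₂ : E) : E :=
  br ψ₀ (B ψ₁ ψ₂) - br ψ₁ (B ψ₀ ψ₂) + br ψ₂ (B ψ₀ ψ₁)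
    - B (br ψ₀ ψ₁) ψ₂ + B (br ψ₀ ψ₂) ψ₁ - B (br ψ₁ ψ₂) ψ₀

variable {br : E → E → E} {B : E →ₗ[R] E →ₗ[R] E}

theorem modBracket_skew (br_skew : ∀ φ ψ : E, br φ ψ = - br ψ φ) (hB : B.IsAlt) (φ ψ : E) :
    modBracket br B φ ψ = - modBracket br B ψ φ := by
  rw [modBracket, modBracket, br_skew, ← hB.neg, neg_add]

theorem modBracket_add_left
    (br_add_left : ∀ φ₁ φ₂ ψ : E, br (φ₁ + φ₂) ψ = br φ₁ ψ + br φ₂ ψ) (φ₁ φ₂ ψ : E) :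
    modBracket br B (φ₁ + φ₂) ψ = modBracket br B φ₁ ψ + modBracket br B φ₂ ψ := by
  simp only [modBracket, br_add_left, map_add, LinearMap.add_apply]
  abel

theorem modBracket_add_right (br_add_right : ∀ φ ψ₁ ψ₂ : E, br φ (ψ₁ + ψ₂) = br φ ψ₁ + br φ ψ₂)
    (φ ψ₁ ψ₂ : E) :
    modBracket br B φ (ψ₁ + ψ₂) = modBracket br B φ ψ₁ + modBracket br B φ ψ₂ := by
  simp only [modBracket, br_add_right, map_add]
  abel

theorem modBracket_smul_left {k : Type*} [CommSemiring k] [Algebra k R] [Module k E]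
    [IsScalarTower k R E] (br_smul_left : ∀ (a : k) (φ ψ : E), br (a • φ) ψ = a • br φ ψ)
    (a : k) (φ ψ : E) : modBracket br B (a • φ) ψ = a • modBracket br B φ ψ := by
  rw [modBracket, modBracket, br_smul_left, ← algebraMap_smul R a φ, map_smul,
    LinearMap.smul_apply, algebraMap_smul, smul_add]

theorem modBracket_smul_right {k : Type*} [CommSemiring k] [Algebra k R] [Module k E]
    [IsScalarTower k R E] (br_smul_right : ∀ (a : k) (φ ψ : E), br φ (a • ψ) = a • br φ ψ)
    (a : k) (φ ψ : E) : modBracket br B φ (a • ψ) = a • modBracket br B φ ψ := by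
  rw [modBracket, modBracket, br_smul_right, ← algebraMap_smul R a ψ, map_smul,
    algebraMap_smul, smul_add]

theorem modBracket_leibniz {k : Type*} [CommSemiring k] [Algebra k R]
    {ρ : E →ₗ[R] Derivation k R R}
    (leibniz : ∀ (φ : E) (f : R) (ψ : E), br φ (f • ψ) = ρ φ f • ψ + f • br φ ψ)
    (φ : E) (f : R) (ψ : E) :
    modBracket br B φ (f • ψ) = ρ φ f • ψ + f • modBracket br B φ ψ := by
  simp only [modBracket, leibniz, map_smul, smul_add]
  abel

theorem anchor_modBracket {k : Type*} [CommSemiring k] [Algebra k R]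
    {ρ : E →ₗ[R] Derivation k R R} (B_ker : ∀ φ ψ : E, ρ (B φ ψ) = 0) (φ ψ : E) :
    ρ (modBracket br B φ ψ) = ρ (br φ ψ) := by
  rw [modBracket, map_add, B_ker, add_zero]

theorem jacobiator_modBracket
    (br_add_left : ∀ φ₁ φ₂ ψ : E, br (φ₁ + φ₂) ψ = br φ₁ ψ + br φ₂ ψ)
    (br_skew : ∀ φ ψ : E, br φ ψ = - br ψ φ) (hB : B.IsAlt) (φ ψ₁ ψ₂ : E) :
    jacobiator (modBracket br B) φ ψ₁ ψ₂ =
      jacobiator br φ ψ₁ ψ₂ + adjointDifferential br B φ ψ₁ ψ₂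
        + B φ (B ψ₁ ψ₂) + B ψ₂ (B φ ψ₁) - B ψ₁ (B φ ψ₂) := by
  have br_add_right := add_right_of_skew br_add_left br_skew
  simp only [jacobiator, adjointDifferential, modBracket, br_add_right, br_add_left, map_add,
    LinearMap.add_apply]
  rw [← hB.neg φ (br ψ₁ ψ₂), ← hB.neg ψ₁ (br φ ψ₂), ← hB.neg ψ₂ (B φ ψ₁),
    br_skew (B φ ψ₁) ψ₂]
  abel

theorem anchor_adjointDifferential {k : Type*} [CommRing k] [Algebra k R]
    {ρ : E →ₗ[R] Derivation k R R} (anchor_br : ∀ φ ψ : E, ρ (br φ ψ) = ⁅ρ φ, ρ ψ⁆)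
    (B_ker : ∀ φ ψ : E, ρ (B φ ψ) = 0) (ψ₀ ψ₁ ψ₂ : E) :
    ρ (adjointDifferential br B ψ₀ ψ₁ ψ₂) = 0 := by
  simp [adjointDifferential, anchor_br, B_ker]

end Modified

end LieRinehart

open LieRinehart in
/-- Let `(R,E,[.,.],ρ)` be a Lie–Rinehart algebra and `B : E × E → ker ρ`
an alternating `R`-bilinear map.  For the modified bracket `[φ,ψ]_B := [φ,ψ] + B(φ,ψ)`:
(a) `[.,.]_B` is skew-symmetric `k`-bilinear, satisfies the Leibniz rule, and
    `ρ([φ,ψ]_B) = ρ([φ,ψ])`;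
(b) its Jacobiator equals `D₀B + B(φ,B(ψ₁,ψ₂)) + B(ψ₂,B(φ,ψ₁)) − B(ψ₁,B(φ,ψ₂))`,
    and in particular takes values in `ker ρ`;
(c) if `B(χ,κ) = 0` for `κ ∈ ker ρ`, the Jacobiator equals `D₀B`, i.e. `(E,ρ,[.,.]_B)`
    satisfies the twisted Jacobi identity with twist `H = D₀B`. -/
theorem modified_bracket_of_LieRinehart
    {k R E : Type*} [Field k] [CommRing R] [Algebra k R]
    [AddCommGroup E] [Module k E] [Module R E] [IsScalarTower k R E]
    (ρ : E →ₗ[R] Derivation k R R)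
    (br : E → E → E)
    (br_add_left : ∀ φ₁ φ₂ ψ : E, br (φ₁ + φ₂) ψ = br φ₁ ψ + br φ₂ ψ)
    (br_smul_left : ∀ (a : k) (φ ψ : E), br (a • φ) ψ = a • br φ ψ)
    (br_skew : ∀ φ ψ : E, br φ ψ = - br ψ φ)
    (leibniz : ∀ (φ : E) (f : R) (ψ : E), br φ (f • ψ) = ρ φ f • ψ + f • br φ ψ)
    -- untwisted Jacobi identity: (E, br) is a Lie algebra
    (jacobi : ∀ φ ψ₁ ψ₂ : E, br φ (br ψ₁ ψ₂) = br (br φ ψ₁) ψ₂ + br ψ₁ (br φ ψ₂))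
    (anchor_br : ∀ φ ψ : E, ρ (br φ ψ) = ⁅ρ φ, ρ ψ⁆)
    -- B is an alternating R-bilinear map with values in ker ρ
    (B : E →ₗ[R] E →ₗ[R] E)
    (B_alt : ∀ φ : E, B φ φ = 0)
    (B_ker : ∀ φ ψ : E, ρ (B φ ψ) = 0)
    -- the modified bracket and the twist D₀B
    (brB : E → E → E) (hbrB : ∀ φ ψ : E, brB φ ψ = br φ ψ + B φ ψ)
    (D₀B : E → E → E → E)
    (hD₀B : ∀ ψ₀ ψ₁ ψ₂ : E, D₀B ψ₀ ψ₁ ψ₂ =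
      br ψ₀ (B ψ₁ ψ₂) - br ψ₁ (B ψ₀ ψ₂) + br ψ₂ (B ψ₀ ψ₁)
        - B (br ψ₀ ψ₁) ψ₂ + B (br ψ₀ ψ₂) ψ₁ - B (br ψ₁ ψ₂) ψ₀) :
    -- (a) skew-symmetry, k-bilinearity, Leibniz rule and anchor compatibility of [.,.]_B
    ((∀ φ ψ : E, brB φ ψ = - brB ψ φ) ∧
     (∀ φ₁ φ₂ ψ : E, brB (φ₁ + φ₂) ψ = brB φ₁ ψ + brB φ₂ ψ) ∧
     (∀ φ ψ₁ ψ₂ : E, brB φ (ψ₁ + ψ₂) = brB φ ψ₁ + brB φ ψ₂) ∧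
     (∀ (a : k) (φ ψ : E), brB (a • φ) ψ = a • brB φ ψ) ∧
     (∀ (a : k) (φ ψ : E), brB φ (a • ψ) = a • brB φ ψ) ∧
     (∀ (φ : E) (f : R) (ψ : E), brB φ (f • ψ) = ρ φ f • ψ + f • brB φ ψ) ∧
     (∀ φ ψ : E, ρ (brB φ ψ) = ρ (br φ ψ))) ∧
    -- (b) the Jacobiator of [.,.]_B
    ((∀ φ ψ₁ ψ₂ : E,
      brB φ (brB ψ₁ ψ₂) - brB (brB φ ψ₁) ψ₂ - brB ψ₁ (brB φ ψ₂) =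
        D₀B φ ψ₁ ψ₂ + B φ (B ψ₁ ψ₂) + B ψ₂ (B φ ψ₁) - B ψ₁ (B φ ψ₂)) ∧
     (∀ φ ψ₁ ψ₂ : E,
      ρ (brB φ (brB ψ₁ ψ₂) - brB (brB φ ψ₁) ψ₂ - brB ψ₁ (brB φ ψ₂)) = 0)) ∧
    -- (c) if B vanishes on ker ρ in the second slot, the Jacobiator is exactly D₀B
    ((∀ χ κ : E, ρ κ = 0 → B χ κ = 0) →
      ∀ φ ψ₁ ψ₂ : E,
        brB φ (brB ψ₁ ψ₂) - brB (brB φ ψ₁) ψ₂ - brB ψ₁ (brB φ ψ₂) = D₀B φ ψ₁ ψ₂) := by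
  obtain rfl : brB = modBracket br B := funext₂ hbrB
  obtain rfl : D₀B = adjointDifferential br B := funext₃ hD₀B
  have jacobiator_eq (φ ψ₁ ψ₂ : E) :
      jacobiator (modBracket br B) φ ψ₁ ψ₂ = adjointDifferential br B φ ψ₁ ψ₂
        + B φ (B ψ₁ ψ₂) + B ψ₂ (B φ ψ₁) - B ψ₁ (B φ ψ₂) := by
    rw [jacobiator_modBracket br_add_left br_skew B_alt, jacobiator_eq_zero jacobi, zero_add]
  refine ⟨⟨modBracket_skew br_skew B_alt, modBracket_add_left br_add_left,
    modBracket_add_right (add_right_of_skew br_add_left br_skew),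
    modBracket_smul_left br_smul_left,
    modBracket_smul_right (smul_right_of_skew br_smul_left br_skew),
    modBracket_leibniz leibniz, anchor_modBracket B_ker⟩,
    ⟨jacobiator_eq, fun φ ψ₁ ψ₂ => ?_⟩, fun hvan φ ψ₁ ψ₂ => ?_⟩
  · change ρ (jacobiator _ φ ψ₁ ψ₂) = 0
    simp [jacobiator_eq, anchor_adjointDifferential anchor_br B_ker, B_ker]
  · change jacobiator _ φ ψ₁ ψ₂ = _
    rw [jacobiator_eq, hvan φ _ (B_ker _ _), hvan ψ₂ _ (B_ker _ _), hvan ψ₁ _ (B_ker _ _)]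
    abel
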